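/- Let T be a Θ-twisted O-operator on a 3-Lie algebra g with respect to (V,ρ). Define ρ_Θ: Λ²V → gl(g) by ρ_Θ(u,v)x = [Tu,Tv,x]_g - T(ρ(Tv,x)u + ρ(x,Tu)v + Θ(x,Tu,Tv)). Then (g, ρ_Θ) is a representation of the 3-Lie algebra (V, [·,·,·]_T). -/

import Mathlib

universe u

def Skew12 {A M : Type*} [Neg M] (f : A → A → A → M) : Prop :=
  ∀ x y z, f x y z = - f y x z

def Skew23 {A M : Type*} [Neg M] (f : A → A → A → M) : Prop :=
  ∀ x y z, f x y z = - f x z y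

def LinFst (K : Type*) [Field K] {A M : Type*} [AddCommGroup A] [Module K A]
    [AddCommGroup M] [Module K M] (f : A → A → A → M) : Prop :=
  ∀ (a : K) (x x' y z : A), f (a • x + x') y z = a • f x y z + f x' y z

def LinThd (K : Type*) [Field K] {A M : Type*} [AddCommGroup A] [Module K A]
    [AddCommGroup M] [Module K M] (f : A → A → A → M) : Prop :=
  ∀ (a : K) (x y z z' : A), f x y (a • z + z') = a • f x y z + f x y z'

/-- A 3-Lie algebra structure: a trilinear skew-symmetric bracket satisfying
the Filippov (fundamental) identity. -/
def IsThreeLie (K : Type*) [Field K] {A : Type*} [AddCommGroup A] [Module K A]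
    (b : A → A → A → A) : Prop :=
  LinFst K b ∧ Skew12 b ∧ Skew23 b ∧
    ∀ x1 x2 x3 x4 x5 : A,
      b x1 x2 (b x3 x4 x5) =
        b (b x1 x2 x3) x4 x5 + b x3 (b x1 x2 x4) x5 + b x3 x4 (b x1 x2 x5)

/-- A representation of a 3-Lie algebra on a module. -/
def IsRep (K : Type*) [Field K] {A M : Type*} [AddCommGroup A] [Module K A]
    [AddCommGroup M] [Module K M] (b : A → A → A → A) (ρ : A → A → M → M) : Prop :=
  (∀ (a : K) (x x' y : A) (v : M), ρ (a • x + x') y v = a • ρ x y v + ρ x' y v) ∧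
  (∀ (x y : A) (v : M), ρ x y v = - ρ y x v) ∧
  (∀ (x y : A) (a : K) (v v' : M), ρ x y (a • v + v') = a • ρ x y v + ρ x y v') ∧
  (∀ (x1 x2 x3 x4 : A) (v : M),
      ρ x1 x2 (ρ x3 x4 v) =
        ρ (b x1 x2 x3) x4 v + ρ x3 (b x1 x2 x4) v + ρ x3 x4 (ρ x1 x2 v)) ∧
  (∀ (x1 x2 x3 x4 : A) (v : M),
      ρ (b x1 x2 x3) x4 v =
        ρ x1 x2 (ρ x3 x4 v) + ρ x2 x3 (ρ x1 x4 v) + ρ x3 x1 (ρ x2 x4 v))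

/-- A 2-cocycle in the Chevalley-Eilenberg complex of a 3-Lie algebra. -/
def IsCocycle (K : Type*) [Field K] {A M : Type*} [AddCommGroup A] [Module K A]
    [AddCommGroup M] [Module K M] (b : A → A → A → A) (ρ : A → A → M → M)
    (Θ : A → A → A → M) : Prop :=
  LinFst K Θ ∧ Skew12 Θ ∧ Skew23 Θ ∧
    ∀ x1 x2 y1 y2 y3 : A,
      Θ x1 x2 (b y1 y2 y3) + ρ x1 x2 (Θ y1 y2 y3) =
        Θ (b x1 x2 y1) y2 y3 + Θ y1 (b x1 x2 y2) y3 + Θ y1 y2 (b x1 x2 y3)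
          + ρ y2 y3 (Θ x1 x2 y1) + ρ y3 y1 (Θ x1 x2 y2) + ρ y1 y2 (Θ x1 x2 y3)

/-- A Θ-twisted O-operator on a 3-Lie algebra. -/
def IsTwistedO {K : Type*} [Field K] {A M : Type*} [AddCommGroup A] [Module K A]
    [AddCommGroup M] [Module K M] (b : A → A → A → A) (ρ : A → A → M → M)
    (Θ : A → A → A → M) (T : M →ₗ[K] A) : Prop :=
  ∀ u v w : M,
    b (T u) (T v) (T w) =
      T (ρ (T u) (T v) w + ρ (T v) (T w) u + ρ (T w) (T u) v + Θ (T u) (T v) (T w))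

/-- The Θ-twisted semidirect product bracket on A × M. -/
def sdBracket {A M : Type*} [AddCommGroup M]
    (b : A → A → A → A) (ρ : A → A → M → M) (Θ : A → A → A → M) :
    A × M → A × M → A × M → A × M :=
  fun p q r =>
    (b p.1 q.1 r.1,
      ρ p.1 q.1 r.2 + ρ r.1 p.1 q.2 + ρ q.1 r.1 p.2 + Θ p.1 q.1 r.1)

/-- The bracket [u,v,w]_T induced on V by a twisted O-operator T. -/
def indBracket {K : Type*} [Field K] {A M : Type*} [AddCommGroup A] [Module K A]
    [AddCommGroup M] [Module K M] (ρ : A → A → M → M) (Θ : A → A → A → M)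
    (T : M →ₗ[K] A) : M → M → M → M :=
  fun u v w =>
    ρ (T u) (T v) w + ρ (T v) (T w) u + ρ (T w) (T u) v + Θ (T u) (T v) (T w)

/-- Chevalley-Eilenberg coboundary of a 1-cochain θ : g → V. -/
def cobound {K : Type*} [Field K] {A M : Type*} [AddCommGroup A] [Module K A]
    [AddCommGroup M] [Module K M] (b : A → A → A → A) (ρ : A → A → M → M)
    (θ : A →ₗ[K] M) : A → A → A → M :=
  fun x y z => ρ x y (θ z) + ρ y z (θ x) + ρ z x (θ y) - θ (b x y z)

/-- Cyclic sum {x,y,z}^C = {x,y,z} + {y,z,x} + {z,x,y}. -/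
def cycSum {A : Type*} [AddCommGroup A] (m : A → A → A → A) : A → A → A → A :=
  fun x y z => m x y z + m y z x + m z x y

/-- Subadjacent bracket [x,y,z]_* = {x,y,z}^C + [[x,y,z]] of a 3-NS-Lie algebra. -/
def nsStar {A : Type*} [AddCommGroup A] (m n : A → A → A → A) : A → A → A → A :=
  fun x y z => cycSum m x y z + n x y z

/-- A 3-NS-Lie algebra structure on A given by operations m = {·,·,·} and n = [[·,·,·]]. -/
def IsThreeNS (K : Type*) [Field K] {A : Type*} [AddCommGroup A] [Module K A]
    (m n : A → A → A → A) : Prop :=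
  LinFst K m ∧ LinThd K m ∧ Skew12 m ∧ LinFst K n ∧ Skew12 n ∧ Skew23 n ∧
  (∀ x1 x2 x3 x4 x5 : A,
      m x1 x2 (m x3 x4 x5) =
        m (cycSum m x1 x2 x3) x4 x5 + m (n x1 x2 x3) x4 x5
          + m x3 (cycSum m x1 x2 x4) x5 + m x3 (n x1 x2 x4) x5
          + m x3 x4 (m x1 x2 x5)) ∧
  (∀ x1 x2 x3 x4 x5 : A,
      m (cycSum m x1 x2 x3) x4 x5 + m (n x1 x2 x3) x4 x5 =
        m x1 x2 (m x3 x4 x5) + m x2 x3 (m x1 x4 x5) + m x3 x1 (m x2 x4 x5)) ∧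
  (∀ x1 x2 x3 x4 x5 : A,
      n x1 x2 (nsStar m n x3 x4 x5) + m x1 x2 (n x3 x4 x5) =
        n (nsStar m n x1 x2 x3) x4 x5 + n x3 (nsStar m n x1 x2 x4) x5
          + n x3 x4 (nsStar m n x1 x2 x5)
          + m x4 x5 (n x1 x2 x3) + m x5 x3 (n x1 x2 x4) + m x3 x4 (n x1 x2 x5))

/-- Nijenhuis operator on a 3-Lie algebra. -/
def IsNijenhuis {K : Type*} [Field K] {A : Type*} [AddCommGroup A] [Module K A]
    (b : A → A → A → A) (N : A →ₗ[K] A) : Prop :=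
  ∀ x y z : A,
    b (N x) (N y) (N z) =
      N (b (N x) (N y) z + b (N x) y (N z) + b x (N y) (N z)
        - N (b (N x) y z + b x (N y) z + b x y (N z)) + N (N (b x y z)))

/-- A Lie algebra structure (bilinear skew bracket with Jacobi identity). -/
def IsLie (K : Type*) [Field K] {A : Type*} [AddCommGroup A] [Module K A]
    (br : A → A → A) : Prop :=
  (∀ (a : K) (x x' y : A), br (a • x + x') y = a • br x y + br x' y) ∧
  (∀ x y : A, br x y = - br y x) ∧
  (∀ x y z : A, br x (br y z) = br (br x y) z + br y (br x z))

/-- A representation of a Lie algebra. -/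
def IsLieRep (K : Type*) [Field K] {A M : Type*} [AddCommGroup A] [Module K A]
    [AddCommGroup M] [Module K M] (br : A → A → A) (ρ : A → M → M) : Prop :=
  (∀ (a : K) (x x' : A) (v : M), ρ (a • x + x') v = a • ρ x v + ρ x' v) ∧
  (∀ (x : A) (a : K) (v v' : M), ρ x (a • v + v') = a • ρ x v + ρ x v') ∧
  (∀ (x y : A) (v : M), ρ (br x y) v = ρ x (ρ y v) - ρ y (ρ x v))

/-- A Chevalley-Eilenberg 2-cocycle of a Lie algebra. -/
def IsLieCocycle (K : Type*) [Field K] {A M : Type*} [AddCommGroup A] [Module K A]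
    [AddCommGroup M] [Module K M] (br : A → A → A) (ρ : A → M → M)
    (Θ : A → A → M) : Prop :=
  (∀ (a : K) (x x' y : A), Θ (a • x + x') y = a • Θ x y + Θ x' y) ∧
  (∀ x y : A, Θ x y = - Θ y x) ∧
  (∀ x y z : A,
      ρ x (Θ y z) + ρ y (Θ z x) + ρ z (Θ x y)
        + Θ x (br y z) + Θ y (br z x) + Θ z (br x y) = 0)

/-- A Θ-twisted O-operator on a Lie algebra. -/
def IsLieTwistedO {K : Type*} [Field K] {A M : Type*} [AddCommGroup A] [Module K A]
    [AddCommGroup M] [Module K M] (br : A → A → A) (ρ : A → M → M)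
    (Θ : A → A → M) (T : M →ₗ[K] A) : Prop :=
  ∀ u v : M, br (T u) (T v) = T (ρ (T u) v - ρ (T v) u + Θ (T u) (T v))

/-- The 3-Lie bracket induced by a Lie bracket and a trace map τ. -/
def inducedTri {K : Type*} [Field K] {A : Type*} [AddCommGroup A] [Module K A]
    (br : A → A → A) (τ : A →ₗ[K] K) : A → A → A → A :=
  fun x y z => τ x • br y z + τ y • br z x + τ z • br x y

/-- The induced representation ρ_τ of the induced 3-Lie algebra. -/
def rhoTau {K : Type*} [Field K] {A M : Type*} [AddCommGroup A] [Module K A]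
    [AddCommGroup M] [Module K M] (ρ : A → M → M) (τ : A →ₗ[K] K) :
    A → A → M → M :=
  fun x y v => τ x • ρ y v - τ y • ρ x v

/-- The induced 2-cocycle Θ_τ on the induced 3-Lie algebra. -/
def thetaTau {K : Type*} [Field K] {A M : Type*} [AddCommGroup A] [Module K A]
    [AddCommGroup M] [Module K M] (Θ : A → A → M) (τ : A →ₗ[K] K) :
    A → A → A → M :=
  fun x y z => τ x • Θ y z + τ y • Θ z x + τ z • Θ x y

/-- An NS-Lie algebra structure on A. -/
def IsNSLie (K : Type*) [Field K] {A : Type*} [AddCommGroup A] [Module K A]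
    (m n : A → A → A) : Prop :=
  (∀ (a : K) (x x' y : A), m (a • x + x') y = a • m x y + m x' y) ∧
  (∀ (x : A) (a : K) (y y' : A), m x (a • y + y') = a • m x y + m x y') ∧
  (∀ (a : K) (x x' y : A), n (a • x + x') y = a • n x y + n x' y) ∧
  (∀ x y : A, n x y = - n y x) ∧
  (∀ x y z : A,
      m (m x y) z - m x (m y z) - m (m y x) z + m y (m x z) + m (n x y) z = 0) ∧
  (∀ x y z : A,
      n x (m y z - m z y + n y z) + n y (m z x - m x z + n z x)
        + n z (m x y - m y x + n x y)
        + m x (n y z) + m y (n z x) + m z (n x y) = 0)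

/-!
The Θ-twisted semidirect product `g ⋉_Θ V` is a 3-Lie algebra, and `T` is a Θ-twisted
O-operator exactly when its graph `{(Tu, u)}` is a subalgebra, isomorphic to `(V, [·,·,·]_T)`.
The projection `(x, v) ↦ x - Tv` identifies the quotient of `g ⋉_Θ V` by the graph with `g`,
and under this identification `ρ_Θ(u, v)` is the action of `ad_{(Tu,u),(Tv,v)}` on the quotient.
The axioms of a representation then follow from the two fundamental identities of `g ⋉_Θ V`.
-/

theorem Skew12.cyclic {A N : Type*} [AddCommGroup N] {f : A → A → A → N} (h12 : Skew12 f)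
    (h23 : Skew23 f) (x y z : A) : f x y z = f y z x := by
  rw [h12, h23, neg_neg]

section ThreeLie

variable {K : Type*} [Field K] {A M N : Type*} [AddCommGroup A] [Module K A]
    [AddCommGroup M] [Module K M] [AddCommGroup N] [Module K N]

theorem LinFst.linSnd {f : A → A → A → N} (hl : LinFst K f) (h12 : Skew12 f)
    (a : K) (x y y' z : A) : f x (a • y + y') z = a • f x y z + f x y' z := by
  rw [h12 x (a • y + y') z, hl a y y' x z, h12 y x z, h12 y' x z]
  module

theorem LinFst.linThd {f : A → A → A → N} (hl : LinFst K f) (h12 : Skew12 f)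
    (h23 : Skew23 f) : LinThd K f := fun a x y z z' => by
  linear_combination (norm := module) h23 x y (a • z + z') - hl.linSnd h12 a x z z' y
    - a • h23 x y z - h23 x y z'

theorem LinFst.map_add_thd {f : A → A → A → N} (hl : LinFst K f) (h12 : Skew12 f)
    (h23 : Skew23 f) (x y z z' : A) : f x y (z + z') = f x y z + f x y z' := by
  simpa using hl.linThd h12 h23 1 x y z z'

/-- The second fundamental identity of a 3-Lie algebra: by cyclic symmetry it is the
fundamental identity for the derivation `ad_{x₄,x₅}` applied to `[x₁,x₂,x₃]`. -/
theorem IsThreeLie.fundamental_left {b : A → A → A → A} (hb : IsThreeLie K b)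
    (x1 x2 x3 x4 x5 : A) :
    b (b x1 x2 x3) x4 x5 =
      b x1 x2 (b x3 x4 x5) + b x2 x3 (b x1 x4 x5) + b x3 x1 (b x2 x4 x5) := by
  obtain ⟨-, h12, h23, hF⟩ := hb
  have cyc := h12.cyclic h23
  rw [cyc, hF, ← cyc x1 x4 x5, cyc (b x1 x4 x5), ← cyc x2 x4 x5, ← cyc x3 x1,
    ← cyc x3 x4 x5]
  abel

variable {b : A → A → A → A} {ρ : A → A → M → M}

theorem IsRep.linSnd (hρ : IsRep K b ρ) (a : K) (x y y' : A) (v : M) :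
    ρ x (a • y + y') v = a • ρ x y v + ρ x y' v := by
  obtain ⟨h1, hs, -⟩ := hρ
  rw [hs x (a • y + y') v, h1 a y y' x v, hs y x v, hs y' x v]
  module

theorem IsRep.map_add (hρ : IsRep K b ρ) (x y : A) (v w : M) :
    ρ x y (v + w) = ρ x y v + ρ x y w := by
  simpa using hρ.2.2.1 x y 1 v w

theorem IsRep.map_zero (hρ : IsRep K b ρ) (x y : A) : ρ x y 0 = 0 := by
  simpa using hρ.map_add x y 0 0

theorem IsRep.map_neg (hρ : IsRep K b ρ) (x y : A) (v : M) : ρ x y (-v) = - ρ x y v := by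
  simpa [hρ.map_zero] using hρ.2.2.1 x y (-1) v 0

theorem isThreeLie_sdBracket {Θ : A → A → A → M}
    (hb : IsThreeLie K b) (hρ : IsRep K b ρ) (hΘ : IsCocycle K b ρ Θ) :
    IsThreeLie K (sdBracket b ρ Θ) := by
  obtain ⟨hbl, hb12, hb23, hbF⟩ := hb
  have ⟨hρl, hρs, hρr, hρF, hρF'⟩ := hρ
  obtain ⟨hΘl, hΘ12, hΘ23, hΘc⟩ := hΘ
  refine ⟨fun a x x' y z => ?_, fun p q r => ?_, fun p q r => ?_, fun p q r s t => ?_⟩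
  · simp only [sdBracket, Prod.fst_add, Prod.snd_add, Prod.smul_fst, Prod.smul_snd,
      Prod.mk_add_mk, Prod.smul_mk, Prod.mk.injEq]
    refine ⟨hbl a x.1 x'.1 y.1 z.1, ?_⟩
    rw [hρl a x.1 x'.1 y.1 z.2, hρ.linSnd a z.1 x.1 x'.1 y.2, hρr y.1 z.1 a x.2 x'.2,
      hΘl a x.1 x'.1 y.1 z.1]
    module
  · simp only [sdBracket, Prod.neg_mk, Prod.mk.injEq]
    refine ⟨hb12 p.1 q.1 r.1, ?_⟩
    linear_combination (norm := module) hρs p.1 q.1 r.2 + hρs r.1 p.1 q.2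
      + hρs q.1 r.1 p.2 + hΘ12 p.1 q.1 r.1
  · simp only [sdBracket, Prod.neg_mk, Prod.mk.injEq]
    refine ⟨hb23 p.1 q.1 r.1, ?_⟩
    linear_combination (norm := module) hρs p.1 q.1 r.2 + hρs r.1 p.1 q.2
      + hρs q.1 r.1 p.2 + hΘ23 p.1 q.1 r.1
  · simp only [sdBracket, Prod.mk_add_mk, Prod.mk.injEq]
    refine ⟨hbF p.1 q.1 r.1 s.1 t.1, ?_⟩
    simp only [hρ.map_add]
    -- the `V`-components of `t`, `r`, `s` are handled by the first identity of `ρ`,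
    -- those of `q` and `p` by the second one, and the `Θ`-terms by the cocycle condition
    linear_combination (norm := module) hρF p.1 q.1 r.1 s.1 t.2 + hρF p.1 q.1 t.1 r.1 s.2
      + hρF p.1 q.1 s.1 t.1 r.2 + hρF' r.1 s.1 t.1 p.1 q.2 + hΘc p.1 q.1 r.1 s.1 t.1
      + hρs q.1 (b r.1 s.1 t.1) p.2 - hρF' r.1 s.1 t.1 q.1 p.2
      - congrArg (ρ r.1 s.1) (hρs t.1 q.1 p.2) - hρ.map_neg r.1 s.1 (ρ q.1 t.1 p.2)
      - congrArg (ρ s.1 t.1) (hρs r.1 q.1 p.2) - hρ.map_neg s.1 t.1 (ρ q.1 r.1 p.2)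
      - congrArg (ρ t.1 r.1) (hρs s.1 q.1 p.2) - hρ.map_neg t.1 r.1 (ρ q.1 s.1 p.2)

theorem IsTwistedO.sdBracket_graph {Θ : A → A → A → M} {T : M →ₗ[K] A}
    (hT : IsTwistedO b ρ Θ T) (u v w : M) :
    sdBracket b ρ Θ (T u, u) (T v, v) (T w, w) =
      (T (indBracket ρ Θ T u v w), indBracket ρ Θ T u v w) := by
  refine Prod.ext (hT u v w) ?_
  simp only [sdBracket, indBracket]
  abel

end ThreeLie

section Quotient

variable {K : Type*} [Field K] {L V W : Type*} [AddCommGroup L] [Module K L]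
    [AddCommGroup V] [Module K V] [AddCommGroup W] [Module K W]
    {B : L → L → L → L} {μ : V → V → V → V} {σ : V →ₗ[K] L} {π : L →ₗ[K] W}

theorem proj_bracket_eq (hB : IsThreeLie K B)
    (hσ : ∀ u v w, B (σ u) (σ v) (σ w) = σ (μ u v w)) (hπσ : ∀ u, π (σ u) = 0)
    (ι : W →ₗ[K] L) (hdecomp : ∀ p, ∃ w, p = ι (π p) + σ w) (u v : V) (p : L) :
    π (B (σ u) (σ v) p) = π (B (σ u) (σ v) (ι (π p))) := by
  obtain ⟨w, hw⟩ := hdecomp p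
  conv_lhs => rw [hw, hB.1.map_add_thd hB.2.1 hB.2.2.1, hσ, map_add, hπσ, add_zero]

/-- The adjoint action of the subalgebra `σ(V)` descends along `π`, because `π` kills `σ(V)`
and `L = ι(W) + σ(V)`. -/
theorem isRep_proj_bracket (hB : IsThreeLie K B)
    (hσ : ∀ u v w, B (σ u) (σ v) (σ w) = σ (μ u v w)) (hπσ : ∀ u, π (σ u) = 0)
    (ι : W →ₗ[K] L) (hdecomp : ∀ p, ∃ w, p = ι (π p) + σ w) :
    IsRep K μ (fun u v x => π (B (σ u) (σ v) (ι x))) := by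
  have hproj := proj_bracket_eq hB hσ hπσ ι hdecomp
  refine ⟨fun a u u' v x => ?_, fun u v x => ?_, fun u v a x x' => ?_,
    fun u1 u2 u3 u4 x => ?_, fun u1 u2 u3 u4 x => ?_⟩
  all_goals dsimp only
  · simp only [map_add, map_smul, hB.1 a]
  · rw [hB.2.1, map_neg]
  · simp only [map_add, map_smul, hB.1.linThd hB.2.1 hB.2.2.1 a]
  · rw [← hproj, hB.2.2.2, ← hproj, hσ, hσ, map_add, map_add]
  · rw [← hσ, hB.fundamental_left, map_add, map_add, hproj u1 u2, hproj u2 u3, hproj u3 u1]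

end Quotient

/-- ρ_Θ makes g a representation of the induced 3-Lie algebra (V,[·,·,·]_T). -/
theorem stmt8 {K : Type*} [Field K] {A M : Type*} [AddCommGroup A] [Module K A]
    [AddCommGroup M] [Module K M]
    (b : A → A → A → A) (ρ : A → A → M → M) (Θ : A → A → A → M) (T : M →ₗ[K] A)
    (hb : IsThreeLie K b) (hρ : IsRep K b ρ) (hΘ : IsCocycle K b ρ Θ)
    (hT : IsTwistedO b ρ Θ T) :
    IsRep K (indBracket ρ Θ T)
      (fun u v x => b (T u) (T v) x
        - T (ρ (T v) x u + ρ x (T u) v + Θ x (T u) (T v))) := by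
  let σ : M →ₗ[K] A × M := T.prod LinearMap.id
  let π : A × M →ₗ[K] A := LinearMap.fst K A M - T ∘ₗ LinearMap.snd K A M
  have hrep := isRep_proj_bracket (isThreeLie_sdBracket hb hρ hΘ) (σ := σ) (π := π)
    hT.sdBracket_graph (fun u => sub_self (T u)) (LinearMap.inl K A M)
    (fun p => ⟨p.2, by ext <;> simp [σ, π]⟩)
  convert hrep using 4 with u v x
  simp only [σ, π, sdBracket, LinearMap.sub_apply, LinearMap.fst_apply, LinearMap.comp_apply,
    LinearMap.snd_apply, LinearMap.inl_apply, LinearMap.prod_apply, Function.prod_apply,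
    LinearMap.id_apply, hρ.map_zero, zero_add, hΘ.2.1.cyclic hΘ.2.2.1 x]
  rw [add_comm (ρ x (T u) v)]
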